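/- arXiv:2207.13951 — 2 statements merged into one kernel-verified Lean document; each statement's English description precedes it below -/
import Mathlib

section
/- Let (V,q) be a non-degenerate quadratic space over k and let (W,p) be a quadratic space over k with dim_k W ≤ ℵ₀. Then there exists an embedding of quadratic spaces W → V, i.e., a k-linear map φ : W → V with q(φ(w)) = p(w) for all w ∈ W. -/
/-!
Write `B = polar q`. If `q` vanished on the common kernel of finitely many linear forms, then,
projecting away from the kernel one form at a time, `q` would have finite strength; so
non-degeneracy gives, inside any subspace of finite codimension, a vector with `q ≠ 0`, and
over an algebraically closed field a vector of any prescribed `q`-value. Hence, given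
`u₁, …, uₙ` with `B uᵢ` linearly independent, one finds `v` with prescribed `B uᵢ v` and
`q v` and with `B v` independent of the `B uᵢ`. Iterating along a countable basis of `W`
realizes the Gram matrix of `p`, and in characteristic `≠ 2` the polar form determines the
quadratic form.
-/

open scoped BigOperators

/-- The submodule of quadratic forms of finite strength: those expressible as a finite
sum of products of two linear forms. -/
def FinStrength (k V : Type*) [Field k] [AddCommGroup V] [Module k V] :
    Submodule k (QuadraticForm k V) where
  carrier := {q | ∃ (n : ℕ) (l m : Fin n → V →ₗ[k] k), ∀ x, q x = ∑ i, l i x * m i x}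
  zero_mem' := ⟨0, ![], ![], fun x => by simp⟩
  add_mem' := by
    rintro q q' ⟨n, l, m, h⟩ ⟨n', l', m', h'⟩
    refine ⟨n + n', Fin.append l l', Fin.append m m', fun x => ?_⟩
    simp [Fin.sum_univ_add, Fin.append_left, Fin.append_right, h, h']
  smul_mem' := by
    rintro c q ⟨n, l, m, h⟩
    refine ⟨n, fun i => c • l i, m, fun x => ?_⟩
    simp [h, Finset.mul_sum, mul_assoc, smul_eq_mul]

section

open QuadraticMap

variable {k V : Type*} [Field k] [AddCommGroup V] [Module k V]

theorem LinearIndependent.pi_surjective {ι : Type*} [Fintype ι] {L : ι → V →ₗ[k] k}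
    (hL : LinearIndependent k L) : Function.Surjective (LinearMap.pi L) := by
  classical
  rw [← LinearMap.dualMap_injective_iff, injective_iff_map_eq_zero]
  intro f hf
  have hsum : ∑ i, f (Pi.single i 1) • L i = 0 := by
    ext v
    have := LinearMap.congr_fun hf v
    simp only [LinearMap.dualMap_apply, LinearMap.zero_apply] at this
    rw [LinearMap.zero_apply, ← this, pi_eq_sum_univ' (LinearMap.pi L v)]
    simp [mul_comm]
  exact (Pi.basisFun k ι).ext fun i => by
    simpa using Fintype.linearIndependent_iff.1 hL _ hsum i

theorem mem_finStrength_of_eq_mul {q : QuadraticForm k V} (l m : V →ₗ[k] k)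
    (h : ∀ x, q x = l x * m x) : q ∈ FinStrength k V :=
  ⟨1, ![l], ![m], fun x => by simp [h]⟩

theorem sub_comp_id_sub_smulRight_mem_finStrength (q : QuadraticForm k V) (l : V →ₗ[k] k)
    (v : V) : q - q.comp (LinearMap.id - l.smulRight v) ∈ FinStrength k V := by
  refine mem_finStrength_of_eq_mul l ((polarBilin q).flip v - q v • l) fun x => ?_
  simp only [sub_apply, QuadraticMap.comp_apply, LinearMap.sub_apply,
    LinearMap.id_apply, LinearMap.smulRight_apply, LinearMap.smul_apply, LinearMap.flip_apply,
    polarBilin_apply_apply, smul_eq_mul, sub_eq_add_neg x, QuadraticMap.map_add q x,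
    ← neg_smul, polar_smul_right, QuadraticMap.map_smul]
  ring

theorem mem_finStrength_of_forall_eq_zero {n : ℕ} (q : QuadraticForm k V)
    (L : Fin n → V →ₗ[k] k) (h : ∀ z, (∀ i, L i z = 0) → q z = 0) :
    q ∈ FinStrength k V := by
  induction n generalizing q with
  | zero =>
    obtain rfl : q = 0 := QuadraticMap.ext fun z => h z fun i => i.elim0
    exact zero_mem _
  | succ n ih =>
    by_cases hL0 : L 0 = 0
    · exact ih q (Fin.tail L) fun z hz => h z <| Fin.cases (by simp [hL0]) hz
    obtain ⟨u, hu⟩ : ∃ u, L 0 u = 1 := by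
      obtain ⟨x, hx⟩ := DFunLike.ne_iff.1 hL0
      exact ⟨(L 0 x)⁻¹ • x, by simpa using inv_mul_cancel₀ hx⟩
    -- `f` projects onto `ker (L 0)`, and `q - q ∘ f` is a single product of linear forms.
    set f : V →ₗ[k] V := LinearMap.id - (L 0).smulRight u
    have hf : ∀ z, L 0 (f z) = 0 := fun z => by simp [f, hu]
    have hqf : q.comp f ∈ FinStrength k V :=
      ih _ (fun i => (L i.succ).comp f) fun z hz => h (f z) <| Fin.cases (hf z) hz
    simpa [f] using add_mem (sub_comp_id_sub_smulRight_mem_finStrength q (L 0) u) hqf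

theorem exists_forall_eq_zero_and_ne_zero {q : QuadraticForm k V} (hq : q ∉ FinStrength k V)
    {n : ℕ} (L : Fin n → V →ₗ[k] k) : ∃ z, (∀ i, L i z = 0) ∧ q z ≠ 0 := by
  by_contra! h
  exact hq (mem_finStrength_of_forall_eq_zero q L h)

theorem apply_eq_zero_of_mem_span {ι : Type*} {L : ι → V →ₗ[k] k} {f : V →ₗ[k] k}
    (hf : f ∈ Submodule.span k (Set.range L)) {z : V} (hz : ∀ i, L i z = 0) : f z = 0 :=
  Submodule.span_le (p := LinearMap.ker (Module.Dual.eval k V z)).2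
    (Set.range_subset_iff.2 hz) hf

section IsAlgClosed

variable [IsAlgClosed k] {q : QuadraticForm k V}

theorem exists_forall_eq_zero_and_polar_eq_zero_and_add_eq (hq : q ∉ FinStrength k V)
    {n : ℕ} (L : Fin n → V →ₗ[k] k) (v : V) (a : k) :
    ∃ z, (∀ i, L i z = 0) ∧ polar q v z = 0 ∧ q (v + z) = a := by
  obtain ⟨z, hz, hqz⟩ := exists_forall_eq_zero_and_ne_zero hq (Fin.snoc L (polarBilin q v))
  have hLz : ∀ i, L i z = 0 := fun i => by simpa using hz i.castSucc
  have hvz : polar q v z = 0 := by simpa using hz (Fin.last n)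
  obtain ⟨t, ht⟩ := IsAlgClosed.exists_eq_mul_self ((a - q v) / q z)
  refine ⟨t • z, fun i => by simp [hLz], by simp [polar_smul_right, hvz], ?_⟩
  rw [QuadraticMap.map_add (⇑q), QuadraticMap.map_smul, polar_smul_right, hvz, smul_eq_mul,
    ← ht]
  field_simp
  ring

theorem exists_isotropic_notMem_span (h2 : (2 : k) ≠ 0) (hq : q ∉ FinStrength k V)
    {n : ℕ} (L : Fin n → V →ₗ[k] k) :
    ∃ w, (∀ i, L i w = 0) ∧ q w = 0 ∧
      polarBilin q w ∉ Submodule.span k (Set.range L) := by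
  obtain ⟨y, hy, hqy⟩ := exists_forall_eq_zero_and_ne_zero hq L
  obtain ⟨z, hz, hyz, hq0⟩ := exists_forall_eq_zero_and_polar_eq_zero_and_add_eq hq L y 0
  refine ⟨y + z, fun i => by simp [hy, hz], hq0, fun hmem => ?_⟩
  have : polar q (y + z) y = 2 * q y := by
    rw [polar_add_left, polar_self, polar_comm, hyz, add_zero, nsmul_eq_mul, Nat.cast_ofNat]
  exact mul_ne_zero h2 hqy (this ▸ apply_eq_zero_of_mem_span hmem hy)

theorem exists_polar_eq_and_eq_and_notMem_span (h2 : (2 : k) ≠ 0) (hq : q ∉ FinStrength k V)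
    {n : ℕ} (u : Fin n → V) (hu : LinearIndependent k fun i => polarBilin q (u i))
    (b : Fin n → k) (a : k) :
    ∃ v, (∀ i, polar q (u i) v = b i) ∧ q v = a ∧
      polarBilin q v ∉ Submodule.span k (Set.range fun i => polarBilin q (u i)) := by
  set L := fun i => polarBilin q (u i)
  obtain ⟨v₀, hv₀⟩ := hu.pi_surjective b
  obtain ⟨z, hz, -, hqv⟩ := exists_forall_eq_zero_and_polar_eq_zero_and_add_eq hq L v₀ a
  have hLv : ∀ i, polar q (u i) (v₀ + z) = b i := fun i => by
    rw [polar_add_right, show polar q (u i) z = 0 from hz i, add_zero]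
    exact congr_fun hv₀ i
  by_cases hmem : polarBilin q (v₀ + z) ∈ Submodule.span k (Set.range L)
  swap
  · exact ⟨v₀ + z, hLv, hqv, hmem⟩
  -- `polar q (v₀ + z)` lies in the span, so it vanishes on `w`: adding the isotropic `w` keeps
  -- the constraints and the value of `q`, and breaks the linear dependence.
  obtain ⟨w, hw, hqw, hwmem⟩ := exists_isotropic_notMem_span h2 hq L
  refine ⟨v₀ + z + w, fun i => ?_, ?_, fun h => ?_⟩
  · rw [polar_add_right, hLv, show polar q (u i) w = 0 from hw i, add_zero]
  · rw [QuadraticMap.map_add (⇑q), hqv, hqw, ← polarBilin_apply_apply,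
      apply_eq_zero_of_mem_span hmem hw, add_zero, add_zero]
  · refine hwmem ?_
    simpa using Submodule.sub_mem _ h hmem

end IsAlgClosed

noncomputable def Nat.prefixRec {α : Type*} (f : ∀ n, (Fin n → α) → α) : ℕ → α
  | n => f n fun i => Nat.prefixRec f i
decreasing_by exact i.isLt

theorem Nat.prefixRec_eq {α : Type*} (f : ∀ n, (Fin n → α) → α) (n : ℕ) :
    Nat.prefixRec f n = f n fun i => Nat.prefixRec f i := by
  rw [Nat.prefixRec]

theorem exists_seq_polar_eq [IsAlgClosed k] {W : Type*} [AddCommGroup W] [Module k W]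
    (h2 : (2 : k) ≠ 0) {q : QuadraticForm k V} (hq : q ∉ FinStrength k V)
    (p : QuadraticForm k W) (w : ℕ → W) :
    ∃ v : ℕ → V, ∀ i j, polar q (v i) (v j) = polar p (w i) (w j) := by
  -- The independence hypothesis sits inside the `∃`, so that `ext` below is total and the
  -- sequence can be defined before its invariant is proved.
  have hext (n : ℕ) (u : Fin n → V) :
      ∃ x, LinearIndependent k (fun i => polarBilin q (u i)) →
      (∀ i, polar q (u i) x = polar p (w i) (w n)) ∧ q x = p (w n) ∧
        polarBilin q x ∉ Submodule.span k (Set.range fun i => polarBilin q (u i)) := by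
    by_cases hu : LinearIndependent k fun i => polarBilin q (u i)
    · obtain ⟨x, hx⟩ := exists_polar_eq_and_eq_and_notMem_span h2 hq u hu
        (fun i => polar p (w i) (w n)) (p (w n))
      exact ⟨x, fun _ => hx⟩
    · exact ⟨0, hu.elim⟩
  choose ext hext using hext
  set v := Nat.prefixRec ext
  have hv (n : ℕ) : v n = ext n fun i => v i := Nat.prefixRec_eq ext n
  have hindep (n : ℕ) : LinearIndependent k fun i : Fin n => polarBilin q (v i) := by
    induction n with
    | zero => exact linearIndependent_empty_type
    | succ n ih =>
      refine linearIndependent_finSucc'.2 ⟨ih, ?_⟩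
      rw [Fin.init_def, hv]
      exact (hext n _ ih).2.2
  have hlt {i j : ℕ} (hij : i < j) : polar q (v i) (v j) = polar p (w i) (w j) := by
    rw [hv j]
    exact (hext j _ (hindep j)).1 ⟨i, hij⟩
  refine ⟨v, fun i j => ?_⟩
  rcases lt_trichotomy i j with hij | rfl | hji
  · exact hlt hij
  · rw [polar_self, polar_self, hv, (hext i _ (hindep i)).2.1]
  · rw [polar_comm, hlt hji, polar_comm]

end

/-- Every quadratic space of countable dimension embeds into any
non-degenerate quadratic space over an algebraically closed field of characteristic
`≠ 2`. -/
theorem quadratic_embedding_of_nondegenerate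
    {k V W : Type*} [Field k] [IsAlgClosed k] (hk2 : (2 : k) ≠ 0)
    [AddCommGroup V] [Module k V] [AddCommGroup W] [Module k W]
    (q : QuadraticForm k V) (hq : q ∉ FinStrength k V)
    (p : QuadraticForm k W) (hW : Module.rank k W ≤ Cardinal.aleph0) :
    ∃ φ : W →ₗ[k] V, ∀ w, q (φ w) = p w := by
  set b := Module.Basis.ofVectorSpace k W
  have : Countable (Module.Basis.ofVectorSpaceIndex k W) := by
    rwa [← Cardinal.mk_le_aleph0_iff, b.mk_eq_rank'']
  obtain ⟨e, he⟩ := countable_iff_exists_injective _ |>.mp this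
  obtain ⟨v, hv⟩ := exists_seq_polar_eq hk2 hq p (Function.extend e b 0)
  set φ := b.constr k (v ∘ e)
  have hpolar : QuadraticMap.polarBilin (q.comp φ) = QuadraticMap.polarBilin p :=
    b.ext fun i => b.ext fun j => by simp [φ, QuadraticMap.polarBilin_comp, hv, he.extend_apply]
  exact ⟨φ, fun w => congr($(QuadraticMap.polarBilin_injective (IsUnit.mk0 2 hk2) hpolar) w)⟩
end

section
/- Let (V,T) be a cubic space over k and suppose there exist linear forms ℓ_1,…,ℓ_s and quadratic forms q_1,…,q_s on V such that T(x,x,x) = Σ_{i=1}^s ℓ_i(x)·q_i(x) for all x ∈ V. Then rrk(V,T) ≤ s. In particular, the residual rank of a cubic space is at most its strength. -/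
open scoped BigOperators

/-- For a trilinear form `T` and a vector `v`, the quadratic form `f_v : x ↦ 3 * T v x x`. -/
noncomputable def fQuad {k V : Type*} [Field k] [AddCommGroup V] [Module k V]
    (T : V →ₗ[k] V →ₗ[k] V →ₗ[k] k) (v : V) : QuadraticForm k V :=
  LinearMap.BilinMap.toQuadraticMap ((3 : k) • T v)

/-- The residual rank of a trilinear form `T`: the dimension of the image of the linear
map `v ↦ class of f_v` in the quotient of the space of quadratic forms by the subspace
of finite-strength quadratic forms. -/
noncomputable def rrk (k : Type*) {V : Type*} [Field k] [AddCommGroup V] [Module k V]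
    (T : V →ₗ[k] V →ₗ[k] V →ₗ[k] k) : Cardinal :=
  Module.rank k ↥(Submodule.span k
    (Set.range fun v => Submodule.Quotient.mk (p := FinStrength k V) (fQuad T v)))

/-- A cubic space `(V,T)` has finite strength if its cubic form `x ↦ T x x x` is a
finite sum of products of a linear form with a quadratic form. -/
def FiniteStrengthCubic (k : Type*) {V : Type*} [Field k] [AddCommGroup V] [Module k V]
    (T : V →ₗ[k] V →ₗ[k] V →ₗ[k] k) : Prop :=
  ∃ (n : ℕ) (l : Fin n → V →ₗ[k] k) (q : Fin n → QuadraticForm k V),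
    ∀ x, T x x x = ∑ i, l i x * q i x

/-!
Polarizing `x ↦ T x x x = ∑ ℓᵢ(x) qᵢ(x)` in the direction `v` gives
`3 T(v,x,x) = ∑ ℓᵢ(v) qᵢ(x) + ∑ ℓᵢ(x) · polar(qᵢ)(x,v)`. The second sum has finite strength, so
modulo finite-strength forms every `f_v` is a combination of the classes of `q₁, …, q_s`, and
these span a space of dimension at most `s`.
-/

section Polarization

variable {R M : Type*} [CommRing R] [AddCommGroup M] [Module R M]

theorem trilinear_cube_add_sub_cube_sub (T : M →ₗ[R] M →ₗ[R] M →ₗ[R] R)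
    (hT1 : ∀ x y z, T x y z = T y x z) (hT2 : ∀ x y z, T x y z = T x z y) (x v : M) :
    T (x + v) (x + v) (x + v) - T (x - v) (x - v) (x - v) - 2 * T v v v = 2 * (3 * T v x x) := by
  simp only [map_add, map_sub, LinearMap.add_apply, LinearMap.sub_apply]
  linear_combination 2 * hT2 x x v + 4 * hT1 x v x

theorem linear_mul_quadratic_add_sub (l : M →ₗ[R] R) (Q : QuadraticForm R M) (x v : M) :
    l (x + v) * Q (x + v) - l (x - v) * Q (x - v) - 2 * (l v * Q v) =
      2 * (l v * Q x + l x * QuadraticMap.polar Q x v) := by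
  have hsub : Q (x - v) = Q x + Q v - QuadraticMap.polar Q x v := by
    rw [sub_eq_add_neg, QuadraticMap.map_add Q, QuadraticMap.map_neg, QuadraticMap.polar_neg_right]
    ring
  rw [map_add, map_sub, QuadraticMap.map_add Q, hsub]
  ring

theorem three_mul_apply_sub_sum_eq_sum_polar [NoZeroDivisors R] (h2 : (2 : R) ≠ 0)
    (T : M →ₗ[R] M →ₗ[R] M →ₗ[R] R)
    (hT1 : ∀ x y z, T x y z = T y x z) (hT2 : ∀ x y z, T x y z = T x z y)
    {ι : Type*} [Fintype ι] (l : ι → M →ₗ[R] R) (q : ι → QuadraticForm R M)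
    (hdec : ∀ x, T x x x = ∑ i, l i x * q i x) (v x : M) :
    3 * T v x x - ∑ i, l i v * q i x = ∑ i, l i x * QuadraticMap.polar (q i) x v := by
  refine mul_left_cancel₀ h2 ?_
  have h := trilinear_cube_add_sub_cube_sub T hT1 hT2 x v
  rw [hdec, hdec, hdec, Finset.mul_sum, ← Finset.sum_sub_distrib, ← Finset.sum_sub_distrib] at h
  simp only [linear_mul_quadratic_add_sub] at h
  rw [mul_sub, ← h, Finset.mul_sum, Finset.mul_sum, ← Finset.sum_sub_distrib]
  exact Finset.sum_congr rfl fun i _ => by ring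

end Polarization

theorem rank_span_range_le_card_of_forall_mem_span {K M α ι : Type*} [Ring K]
    [StrongRankCondition K] [AddCommGroup M] [Module K M] [Fintype ι] (f : α → M) (g : ι → M)
    (hfg : ∀ a, f a ∈ Submodule.span K (Set.range g)) :
    Module.rank K (Submodule.span K (Set.range f)) ≤ Fintype.card ι :=
  calc Module.rank K (Submodule.span K (Set.range f))
      ≤ Module.rank K (Submodule.span K (Set.range g)) :=
        Submodule.rank_mono <| Submodule.span_le.mpr <| Set.range_subset_iff.mpr hfg
    _ ≤ Cardinal.mk (Set.range g) := rank_span_le _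
    _ ≤ Fintype.card ι := by simpa using Cardinal.mk_range_le_lift (f := g)

theorem fQuad_sub_sum_smul_mem_finStrength {k V : Type*} [Field k] [AddCommGroup V] [Module k V]
    (h2 : (2 : k) ≠ 0)
    (T : V →ₗ[k] V →ₗ[k] V →ₗ[k] k)
    (hT1 : ∀ x y z, T x y z = T y x z) (hT2 : ∀ x y z, T x y z = T x z y)
    {s : ℕ} (l : Fin s → V →ₗ[k] k) (q : Fin s → QuadraticForm k V)
    (hdec : ∀ x, T x x x = ∑ i, l i x * q i x) (v : V) :
    fQuad T v - ∑ i, l i v • q i ∈ FinStrength k V := by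
  refine ⟨s, l, fun i => (q i).polarBilin.flip v, fun x => ?_⟩
  simpa [fQuad, smul_eq_mul] using three_mul_apply_sub_sum_eq_sum_polar h2 T hT1 hT2 l q hdec v x

theorem mk_fQuad_eq_sum_smul_mk {k V : Type*} [Field k] [AddCommGroup V] [Module k V]
    (h2 : (2 : k) ≠ 0)
    (T : V →ₗ[k] V →ₗ[k] V →ₗ[k] k)
    (hT1 : ∀ x y z, T x y z = T y x z) (hT2 : ∀ x y z, T x y z = T x z y)
    {s : ℕ} (l : Fin s → V →ₗ[k] k) (q : Fin s → QuadraticForm k V)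
    (hdec : ∀ x, T x x x = ∑ i, l i x * q i x) (v : V) :
    Submodule.Quotient.mk (p := FinStrength k V) (fQuad T v) =
      ∑ i, l i v • Submodule.Quotient.mk (p := FinStrength k V) (q i) := by
  rw [(Submodule.Quotient.eq _).mpr (fQuad_sub_sum_smul_mem_finStrength h2 T hT1 hT2 l q hdec v)]
  simp only [← Submodule.mkQ_apply, map_sum, map_smul]

theorem rrk_le_of_strength_decomposition_general
    {k V : Type*} [Field k]
    (hk2 : (2 : k) ≠ 0)
    [AddCommGroup V] [Module k V]
    (T : V →ₗ[k] V →ₗ[k] V →ₗ[k] k)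
    (hT1 : ∀ x y z, T x y z = T y x z) (hT2 : ∀ x y z, T x y z = T x z y)
    (s : ℕ) (l : Fin s → V →ₗ[k] k) (q : Fin s → QuadraticForm k V)
    (hdec : ∀ x, T x x x = ∑ i, l i x * q i x) :
    rrk k T ≤ (s : Cardinal) := by
  have hspan := rank_span_range_le_card_of_forall_mem_span (K := k)
    (fun v => Submodule.Quotient.mk (p := FinStrength k V) (fQuad T v))
    (fun i => Submodule.Quotient.mk (p := FinStrength k V) (q i)) fun v =>
      Submodule.mem_span_range_iff_exists_fun k |>.mpr
        ⟨fun i => l i v, (mk_fQuad_eq_sum_smul_mk hk2 T hT1 hT2 l q hdec v).symm⟩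
  simpa [rrk] using hspan

/-- Proposition 3.4(b) of the paper. If the cubic form of `(V,T)` can
be written as `∑ i, ℓ_i * q_i` with `s` terms, then `rrk(V,T) ≤ s`; i.e. the residual
rank of a cubic space is at most its strength. -/
theorem rrk_le_of_strength_decomposition
    {k V : Type*} [Field k] [IsAlgClosed k]
    (hk2 : (2 : k) ≠ 0) (hk3 : (3 : k) ≠ 0)
    [AddCommGroup V] [Module k V]
    (T : V →ₗ[k] V →ₗ[k] V →ₗ[k] k)
    (hT1 : ∀ x y z, T x y z = T y x z) (hT2 : ∀ x y z, T x y z = T x z y)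
    (s : ℕ) (l : Fin s → V →ₗ[k] k) (q : Fin s → QuadraticForm k V)
    (hdec : ∀ x, T x x x = ∑ i, l i x * q i x) :
    rrk k T ≤ (s : Cardinal) :=
  rrk_le_of_strength_decomposition_general hk2 T hT1 hT2 s l q hdec
end
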